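/- arXiv:2012.09792 — 2 statements merged into one kernel-verified Lean document; each statement's English description precedes it below -/
import Mathlib

section
/- Let G be a group in which the centralizer of every nontrivial element is infinite cyclic, i.e., for every g ∈ G with g ≠ 1 there exists an element z ∈ G of infinite order such that the centralizer of g in G equals the cyclic subgroup generated by z. Then every nontrivial abelian subgroup A of G is contained in a unique maximal cyclic subgroup of G: there exists a unique subgroup Z of G such that Z is cyclic, A is contained in Z, and every cyclic subgroup of G containing Z is equal to Z. Moreover Z equals the centralizer of any nontrivial element of A. -/
/-!
Cyclic subgroups are abelian, so a cyclic subgroup containing `a` lies in the centralizer of `a`.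
Hence for `a ≠ 1` in `A` the cyclic group `C(a)` is maximal among cyclic subgroups, and it
contains the abelian group `A`. Conversely a maximal cyclic `Z ⊇ A` lies in `C(a)`, and maximality
forces `Z = C(a)`.
-/

namespace Subgroup

variable {G : Type*} [Group G]

theorem le_centralizer_singleton_of_mem {H : Subgroup G} [IsMulCommutative H] {a : G}
    (ha : a ∈ H) : H ≤ centralizer {a} :=
  (le_centralizer H).trans (centralizer_le (Set.singleton_subset_iff.mpr ha))

theorem zpowers_eq_centralizer_singleton_of_le {a w : G} (h : centralizer {a} ≤ zpowers w) :
    zpowers w = centralizer {a} :=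
  le_antisymm (le_centralizer_singleton_of_mem (h (mem_centralizer_singleton_iff.mpr rfl))) h

end Subgroup

open Subgroup

/-- In a group in which the centralizer of every nontrivial element is
infinite cyclic, every nontrivial abelian subgroup is contained in a unique
maximal cyclic subgroup, which moreover equals the centralizer of any
nontrivial element of the abelian subgroup. -/
theorem abelian_subgroup_in_unique_maximal_cyclic
    (G : Type*) [Group G]
    (hG : ∀ g : G, g ≠ 1 → ∃ z : G, ¬ IsOfFinOrder z ∧
      Subgroup.centralizer {g} = Subgroup.zpowers z)
    (A : Subgroup G) (hA : A ≠ ⊥)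
    (hab : ∀ a ∈ A, ∀ b ∈ A, a * b = b * a) :
    (∃! Z : Subgroup G,
      (∃ z : G, Z = Subgroup.zpowers z) ∧ A ≤ Z ∧
      (∀ W : Subgroup G, (∃ w : G, W = Subgroup.zpowers w) → Z ≤ W → W = Z)) ∧
    (∀ Z : Subgroup G,
      ((∃ z : G, Z = Subgroup.zpowers z) ∧ A ≤ Z ∧
        (∀ W : Subgroup G, (∃ w : G, W = Subgroup.zpowers w) → Z ≤ W → W = Z)) →
      ∀ a ∈ A, a ≠ 1 → Z = Subgroup.centralizer {a}) := by
  have centralizer_maximal : ∀ a ∈ A, a ≠ 1 →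
      (∃ z : G, centralizer {a} = zpowers z) ∧ A ≤ centralizer {a} ∧
      (∀ W : Subgroup G, (∃ w : G, W = zpowers w) → centralizer {a} ≤ W →
        W = centralizer {a}) := by
    intro a haA ha
    obtain ⟨z, -, hz⟩ := hG a ha
    refine ⟨⟨z, hz⟩, fun b hb ↦ mem_centralizer_singleton_iff.mpr (hab b hb a haA), ?_⟩
    rintro W ⟨w, rfl⟩ hle
    exact zpowers_eq_centralizer_singleton_of_le hle
  have eq_centralizer : ∀ Z : Subgroup G,
      ((∃ z : G, Z = zpowers z) ∧ A ≤ Z ∧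
        (∀ W : Subgroup G, (∃ w : G, W = zpowers w) → Z ≤ W → W = Z)) →
      ∀ a ∈ A, a ≠ 1 → Z = centralizer {a} := by
    rintro Z ⟨⟨z, rfl⟩, hAZ, hZmax⟩ a haA ha
    obtain ⟨c, -, hc⟩ := hG a ha
    exact (hZmax _ ⟨c, hc⟩ (le_centralizer_singleton_of_mem (hAZ haA))).symm
  obtain ⟨a, haA, ha⟩ := A.bot_or_exists_ne_one.resolve_left hA
  exact ⟨⟨_, centralizer_maximal a haA ha, fun Z hZ ↦ eq_centralizer Z hZ a haA ha⟩,
    eq_centralizer⟩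
end

section
/- Let G be a group in which the centralizer of every nontrivial element is infinite cyclic, i.e., for every g ∈ G with g ≠ 1 there exists an element z ∈ G of infinite order such that the centralizer of g in G equals the cyclic subgroup generated by z. Let γ, η ∈ G be nontrivial, and write γ = γ̄^r and η = η̄^s with γ̄, η̄ ∈ G primitive and integers r, s ≥ 1. Then there exists a group automorphism φ of G with φ(γ) = η if and only if r = s and there exists a group automorphism ψ of G with ψ(γ̄) = η̄. -/
/-!
If `x ^ r = y ^ s ≠ 1`, both `x` and `y` commute with this element, so they lie in its
centralizer `⟨z⟩ ≅ ℤ`. A primitive element of `⟨z⟩` is `z` or `z⁻¹`, and comparing exponents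
of `z` in `x ^ r = y ^ s` with `r, s ≥ 1` forces `x = y` and `r = s`. Hence primitive roots and
exponents of nontrivial elements are unique, and automorphisms preserve both.
-/

def IsPrimitive {G : Type*} [Group G] (g : G) : Prop :=
  ∀ (h : G) (n : ℤ), g = h ^ n → n = 1 ∨ n = -1

namespace IsPrimitive

variable {G H : Type*} [Group G] [Group H]

theorem map_mulEquiv {g : G} (hg : IsPrimitive g) (φ : G ≃* H) : IsPrimitive (φ g) := by
  intro h n hgh
  apply hg (φ.symm h) n
  rw [← map_zpow, ← hgh, MulEquiv.symm_apply_apply]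

theorem exists_zpow_eq_of_mem_zpowers {x z : G} (hx : IsPrimitive x)
    (hxz : x ∈ Subgroup.zpowers z) : ∃ a : ℤ, (a = 1 ∨ a = -1) ∧ z ^ a = x := by
  obtain ⟨a, rfl⟩ := Subgroup.mem_zpowers_iff.mp hxz
  exact ⟨a, hx z a rfl, rfl⟩

theorem eq_and_eq_of_zpow_eq_zpow_of_mem_zpowers {x y z : G} (hz : ¬IsOfFinOrder z)
    (hx : IsPrimitive x) (hy : IsPrimitive y)
    (hxz : x ∈ Subgroup.zpowers z) (hyz : y ∈ Subgroup.zpowers z)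
    {r s : ℤ} (hr : 0 < r) (hs : 0 < s) (hxy : x ^ r = y ^ s) : x = y ∧ r = s := by
  obtain ⟨a, ha, rfl⟩ := hx.exists_zpow_eq_of_mem_zpowers hxz
  obtain ⟨b, hb, rfl⟩ := hy.exists_zpow_eq_of_mem_zpowers hyz
  have hab : a * r = b * s := by
    apply injective_zpow_iff_not_isOfFinOrder.mpr hz
    simpa only [zpow_mul] using hxy
  have : a = b ∧ r = s := by
    rcases ha with rfl | rfl <;> rcases hb with rfl | rfl <;> omega
  exact ⟨congrArg (z ^ ·) this.1, this.2⟩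

theorem eq_and_eq_of_zpow_eq_zpow
    (hG : ∀ g : G, g ≠ 1 → ∃ z : G, ¬IsOfFinOrder z ∧
      Subgroup.centralizer {g} = Subgroup.zpowers z)
    {x y : G} (hx : IsPrimitive x) (hy : IsPrimitive y)
    {r s : ℤ} (hr : 0 < r) (hs : 0 < s) (hxy : x ^ r = y ^ s) (hne : y ^ s ≠ 1) :
    x = y ∧ r = s := by
  obtain ⟨z, hz, hcent⟩ := hG (y ^ s) hne
  have hxz : x ∈ Subgroup.zpowers z := by
    rw [← hcent, Subgroup.mem_centralizer_singleton_iff, ← hxy]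
    exact (Commute.self_zpow x r).eq
  have hyz : y ∈ Subgroup.zpowers z := by
    rw [← hcent, Subgroup.mem_centralizer_singleton_iff]
    exact (Commute.self_zpow y s).eq
  exact eq_and_eq_of_zpow_eq_zpow_of_mem_zpowers hz hx hy hxz hyz hr hs hxy

end IsPrimitive

theorem automorphism_iff_primitive_roots_and_exponents_general
    (G : Type*) [Group G]
    (hG : ∀ g : G, g ≠ 1 → ∃ z : G, ¬ IsOfFinOrder z ∧
      Subgroup.centralizer {g} = Subgroup.zpowers z)
    (γ η gbar hbar : G) (r s : ℤ)
    (hη : η ≠ 1)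
    (hgbar : ∀ (h : G) (n : ℤ), gbar = h ^ n → n = 1 ∨ n = -1)
    (hhbar : ∀ (h : G) (n : ℤ), hbar = h ^ n → n = 1 ∨ n = -1)
    (hr : 1 ≤ r) (hs : 1 ≤ s)
    (hγeq : γ = gbar ^ r) (hηeq : η = hbar ^ s) :
    (∃ φ : G ≃* G, φ γ = η) ↔
      (r = s ∧ ∃ ψ : G ≃* G, ψ gbar = hbar) := by
  subst hγeq hηeq
  constructor
  · rintro ⟨φ, hφ⟩
    rw [map_zpow] at hφ
    obtain ⟨hroots, rfl⟩ := IsPrimitive.eq_and_eq_of_zpow_eq_zpow hG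
      (IsPrimitive.map_mulEquiv hgbar φ) hhbar hr hs hφ hη
    exact ⟨rfl, φ, hroots⟩
  · rintro ⟨rfl, ψ, hψ⟩
    exact ⟨ψ, by rw [map_zpow, hψ]⟩

/-- In a group in which the centralizer of every nontrivial element is
infinite cyclic, two nontrivial elements `γ = gbar ^ r` and `η = hbar ^ s`
(with `gbar`, `hbar` primitive and `r, s ≥ 1`) differ by an automorphism if
and only if `r = s` and their primitive roots differ by an automorphism. -/
theorem automorphism_iff_primitive_roots_and_exponents
    (G : Type*) [Group G]
    (hG : ∀ g : G, g ≠ 1 → ∃ z : G, ¬ IsOfFinOrder z ∧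
      Subgroup.centralizer {g} = Subgroup.zpowers z)
    (γ η gbar hbar : G) (r s : ℤ)
    (hγ : γ ≠ 1) (hη : η ≠ 1)
    (hgbar : ∀ (h : G) (n : ℤ), gbar = h ^ n → n = 1 ∨ n = -1)
    (hhbar : ∀ (h : G) (n : ℤ), hbar = h ^ n → n = 1 ∨ n = -1)
    (hr : 1 ≤ r) (hs : 1 ≤ s)
    (hγeq : γ = gbar ^ r) (hηeq : η = hbar ^ s) :
    (∃ φ : G ≃* G, φ γ = η) ↔
      (r = s ∧ ∃ ψ : G ≃* G, ψ gbar = hbar) :=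
  automorphism_iff_primitive_roots_and_exponents_general G hG γ η gbar hbar r s hη hgbar hhbar hr hs
    hγeq hηeq
end
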